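/- Let φ : ZFSet → ZFSet → Prop be any binary predicate on ZFC sets, and define the unary predicate φ' by: φ'(x) holds if and only if there exist u ∈ x, y₀ ∈ u, and y₁ ∈ u such that x equals the Kuratowski pair ⟨y₀, y₁⟩ and φ(y₀, y₁) holds. Then for all ZFC sets x₀ and x₁, φ'(⟨x₀, x₁⟩) holds if and only if φ(x₀, x₁) holds. -/
import Mathlib

theorem pair_predicate_contraction (φ : ZFSet → ZFSet → Prop) :
    ∀ x₀ x₁ : ZFSet,
      (∃ u ∈ ZFSet.pair x₀ x₁, ∃ y₀ ∈ u, ∃ y₁ ∈ u,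
        ZFSet.pair x₀ x₁ = ZFSet.pair y₀ y₁ ∧ φ y₀ y₁) ↔ φ x₀ x₁ := by
  intro x₀ x₁
  constructor
  · rintro ⟨u, -, y₀, -, y₁, -, h, hφ⟩
    obtain ⟨rfl, rfl⟩ := ZFSet.pair_injective h
    exact hφ
  · intro h
    exact ⟨{x₀, x₁}, by simp [ZFSet.pair, ZFSet.mem_pair], x₀, by simp, x₁, by simp, rfl, h⟩
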